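/- arXiv:1712.08479 — 4 statements merged into one kernel-verified Lean document; each statement's English description precedes it below -/
import Mathlib

section
/- Consider a 3-cell TPFA system with cells 1, 2 connected to an intersection cell 0 with transmissibilities t₁, t₂ > 0 and no direct connection between 1 and 2: A = [[t₁+t₂, -t₁, -t₂],[-t₁, t₁+d₁, 0],[-t₂, 0, t₂+d₂]] with d₁, d₂ ≥ 0, eliminating the intersection unknown (index 0) via the Schur complement yields a direct transmissibility between cells 1 and 2 equal to t₁t₂/(t₁+t₂), i.e., the Star-Delta value. -/
open Matrix

theorem Matrix.sub_mul_inv_mul_apply_of_unique {K m n o : Type*} [Field K] [Fintype o]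
    [DecidableEq o] [Unique o] (D : Matrix m n K) (B : Matrix m o K) (P : Matrix o o K)
    (C : Matrix o n K) (i : m) (j : n) :
    (D - B * P⁻¹ * C) i j = D i j - B i default * C default j / P default default := by
  simp [inv_subsingleton, mul_apply, div_eq_mul_inv, mul_right_comm]

theorem schur_three_cell_star_delta_general (t₁ t₂ d₁ d₂ : ℝ) :
    ((!![t₁ + d₁, 0; 0, t₂ + d₂] : Matrix (Fin 2) (Fin 2) ℝ)
        - !![-t₁; -t₂] * (!![t₁ + t₂] : Matrix (Fin 1) (Fin 1) ℝ)⁻¹ * !![-t₁, -t₂]) 0 1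
      = -(t₁ * t₂ / (t₁ + t₂)) := by
  rw [sub_mul_inv_mul_apply_of_unique]
  simp

/-- Eliminating the intersection cell (index 0) of the 3-cell TPFA system via the Schur
complement yields a direct transmissibility `t₁t₂/(t₁+t₂)` between cells 1 and 2, i.e. the
Star-Delta value (the reduced off-diagonal entry is `-(t₁t₂/(t₁+t₂))`). -/
theorem schur_three_cell_star_delta (t₁ t₂ d₁ d₂ : ℝ)
    (h₁ : 0 < t₁) (h₂ : 0 < t₂) (hd₁ : 0 ≤ d₁) (hd₂ : 0 ≤ d₂) :
    ((!![t₁ + d₁, 0; 0, t₂ + d₂] : Matrix (Fin 2) (Fin 2) ℝ)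
        - !![-t₁; -t₂] * (!![t₁ + t₂] : Matrix (Fin 1) (Fin 1) ℝ)⁻¹ * !![-t₁, -t₂]) 0 1
      = -(t₁ * t₂ / (t₁ + t₂)) :=
  schur_three_cell_star_delta_general t₁ t₂ d₁ d₂
end

section
/- In the star configuration with an additional intersection conductance: if the central cell also has a leakage/normal resistance so that its connection to outer cell i has transmissibility tᵢ = αᵢβ/(αᵢ+β) for an intersection half-transmissibility β > 0, then as β → ∞ the Schur-complement-derived direct transmissibility between cells i and j converges to the Star-Delta value αᵢαⱼ/Σₖ αₖ. -/
/-!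
As `β → ∞` each harmonic-average transmissibility `αₖβ/(αₖ+β) = αₖ - αₖ²/(αₖ+β)` tends to the
outer half-transmissibility `αₖ`, so the Schur-complement expression converges by continuity
of products and quotients, the limiting denominator `Σₖ αₖ` being positive.
-/

open Filter

theorem tendsto_mul_div_add_atTop (a : ℝ) :
    Tendsto (fun β : ℝ => a * β / (a + β)) atTop (nhds a) := by
  have hcorr : Tendsto (fun β : ℝ => a ^ 2 / (a + β)) atTop (nhds 0) :=
    tendsto_const_nhds.div_atTop (tendsto_atTop_add_const_left _ a tendsto_id)
  have hlim : Tendsto (fun β : ℝ => a - a ^ 2 / (a + β)) atTop (nhds a) := by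
    simpa using tendsto_const_nhds.sub hcorr
  refine hlim.congr' ?_
  filter_upwards [eventually_gt_atTop (-a)] with β hβ
  have hne : a + β ≠ 0 := by linarith
  field_simp
  ring

theorem schur_tendsto_star_delta_general {n : ℕ} (α : Fin n → ℝ) (hα : ∀ k, 0 < α k)
    (i j : Fin n) :
    Tendsto (fun β : ℝ =>
        (α i * β / (α i + β)) * (α j * β / (α j + β))
          / ∑ k, α k * β / (α k + β))
      atTop (nhds (α i * α j / ∑ k, α k)) := by
  have hsum : Tendsto (fun β : ℝ => ∑ k, α k * β / (α k + β)) atTop (nhds (∑ k, α k)) :=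
    tendsto_finsetSum _ fun k _ => tendsto_mul_div_add_atTop (α k)
  have hpos : 0 < ∑ k, α k := Finset.sum_pos (fun k _ => hα k) ⟨i, Finset.mem_univ i⟩
  exact ((tendsto_mul_div_add_atTop (α i)).mul (tendsto_mul_div_add_atTop (α j))).div hsum
    hpos.ne'

/-- With connection transmissibilities `tₖ(β) = αₖβ/(αₖ+β)`, the Schur-complement direct
transmissibility `tᵢtⱼ/(Σₖ tₖ)` converges to the Star-Delta value `αᵢαⱼ/(Σₖ αₖ)` as the
intersection half-transmissibility `β → ∞`. -/
theorem schur_tendsto_star_delta {n : ℕ} (α : Fin n → ℝ) (hα : ∀ k, 0 < α k)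
    (i j : Fin n) (hij : i ≠ j) :
    Tendsto (fun β : ℝ =>
        (α i * β / (α i + β)) * (α j * β / (α j + β))
          / ∑ k, α k * β / (α k + β))
      atTop (nhds (α i * α j / ∑ k, α k)) :=
  schur_tendsto_star_delta_general α hα i j
end

section
/- The implicit-Euler upwind finite-volume update for pure advection with no sources is a bounded scheme: if the fluxes are divergence-free on each cell (Σⱼ A_{ij} u_{ij} = 0) and boundary inflow concentrations lie in [0,1], then the new concentrations Tⁿ lie in [0,1] whenever Tⁿ⁻¹ does, for any time step Δt > 0. -/
/-!
At a cell where `T` is maximal, the off-diagonal entries `M i j ≤ 0` only see values `T j ≤ T i`,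
so `M` applied to `T` dominates the row sum times `T i`. The scheme then gives
`(1 + Δt · rowsum) · T i ≤ T_old i + Δt · rowsum · T_in i`, and with nonnegative weights the
right side is at most `(1 + Δt · rowsum) · c` for any common upper bound `c` of the data. The lower bound is the upper bound for `-T`.
-/

open Finset

variable {ι 𝕜 : Type*} [Fintype ι] [Field 𝕜] [LinearOrder 𝕜] [IsStrictOrderedRing 𝕜]

theorem Matrix.rowSum_mul_le_mulVec_of_forall_le {M : Matrix ι ι 𝕜}
    (hoff : ∀ i j, i ≠ j → M i j ≤ 0) {T : ι → 𝕜} {i : ι} (hmax : ∀ j, T j ≤ T i) :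
    (∑ j, M i j) * T i ≤ ∑ j, M i j * T j := by
  rw [sum_mul]
  refine sum_le_sum fun j _ => ?_
  rcases eq_or_ne i j with rfl | hij
  · rfl
  · exact mul_le_mul_of_nonpos_left (hmax j) (hoff i j hij)

theorem implicit_upwind_le {Δt : 𝕜} (hΔt : 0 ≤ Δt) {M : Matrix ι ι 𝕜}
    (hoff : ∀ i j, i ≠ j → M i j ≤ 0) (hrow : ∀ i, 0 ≤ ∑ j, M i j)
    {Tin Told Tn : ι → 𝕜} {c : 𝕜} (hTin : ∀ i, Tin i ≤ c) (hTold : ∀ i, Told i ≤ c)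
    (hscheme : ∀ i, Tn i + Δt * ∑ j, M i j * Tn j = Told i + Δt * (∑ j, M i j) * Tin i)
    (i : ι) : Tn i ≤ c := by
  have : Nonempty ι := ⟨i⟩
  obtain ⟨k, hk⟩ := Finite.exists_max Tn
  have hpos : 0 < 1 + Δt * ∑ j, M k j := by
    have := mul_nonneg hΔt (hrow k)
    linarith
  have hdata : Told k + Δt * (∑ j, M k j) * Tin k ≤ (1 + Δt * ∑ j, M k j) * c := by
    have := mul_le_mul_of_nonneg_left (hTin k) (mul_nonneg hΔt (hrow k))
    linarith [hTold k]
  have hmaxk : (1 + Δt * ∑ j, M k j) * Tn k ≤ (1 + Δt * ∑ j, M k j) * c :=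
    calc (1 + Δt * ∑ j, M k j) * Tn k = Tn k + Δt * ((∑ j, M k j) * Tn k) := by ring
      _ ≤ Tn k + Δt * ∑ j, M k j * Tn j := by
        gcongr
        exact Matrix.rowSum_mul_le_mulVec_of_forall_le hoff hk
      _ = Told k + Δt * (∑ j, M k j) * Tin k := hscheme k
      _ ≤ (1 + Δt * ∑ j, M k j) * c := hdata
  exact (hk i).trans (le_of_mul_le_mul_left hmaxk hpos)

/-- Maximum principle for the implicit-Euler upwind finite-volume scheme: with `M` having
nonpositive off-diagonal entries and nonnegative row sums (divergence-free fluxes, the row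
sum being the boundary inflow coefficient) and boundary inflow concentrations in `[0,1]`,
the new concentrations lie in `[0,1]` whenever the old ones do, for any `Δt > 0`. -/
theorem implicit_upwind_maximum_principle {n : ℕ} (Δt : ℝ) (hΔt : 0 < Δt)
    (M : Matrix (Fin n) (Fin n) ℝ)
    (hoff : ∀ i j, i ≠ j → M i j ≤ 0)
    (hrow : ∀ i, 0 ≤ ∑ j, M i j)
    (Tin Told Tn : Fin n → ℝ)
    (hTin : ∀ i, Tin i ∈ Set.Icc (0 : ℝ) 1)
    (hTold : ∀ i, Told i ∈ Set.Icc (0 : ℝ) 1)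
    (hscheme : ∀ i, Tn i + Δt * ∑ j, M i j * Tn j
      = Told i + Δt * (∑ j, M i j) * Tin i) :
    ∀ i, Tn i ∈ Set.Icc (0 : ℝ) 1 := by
  intro i
  have hneg : ∀ i, (-Tn) i + Δt * ∑ j, M i j * (-Tn) j
      = (-Told) i + Δt * (∑ j, M i j) * (-Tin) i := by
    intro i
    simp only [Pi.neg_apply, mul_neg, sum_neg_distrib]
    linarith [hscheme i]
  have hlow := implicit_upwind_le (c := 0) hΔt.le hoff hrow
    (fun i => neg_nonpos.mpr (hTin i).1) (fun i => neg_nonpos.mpr (hTold i).1) hneg i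
  refine ⟨neg_nonpos.mp hlow, ?_⟩
  exact implicit_upwind_le hΔt.le hoff hrow (fun i => (hTin i).2) (fun i => (hTold i).2)
    hscheme i
end

section
/- A matrix of the form I + ΔtM, where Δt > 0 and M has nonpositive off-diagonal entries and nonnegative row sums, is invertible with (I + ΔtM)⁻¹ entrywise nonnegative and with row sums of the inverse at most 1. -/
/-!
Write `A = 1 + Δt • M`. Its off-diagonal entries are nonpositive and its row sums are at least
`1`, so `A` satisfies a discrete maximum principle: if `A *ᵥ x ≥ 0` then `x ≥ 0`, since at a
negative minimum `x i₀` of `x` the row `i₀` gives `(A *ᵥ x) i₀ ≤ (∑ j, A i₀ j) * x i₀ < 0`.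
Applied to `±x` this makes `A` injective, hence invertible; applied to `A⁻¹ *ᵥ y` it makes `A⁻¹`
nonnegative; applied to `1 - A⁻¹ *ᵥ 1` it bounds the row sums of `A⁻¹` by `1`.
-/

open Matrix

namespace Matrix

variable {ι R : Type*}

section MaximumPrinciple

variable [Fintype ι] [Ring R] [LinearOrder R] [IsStrictOrderedRing R] {A : Matrix ι ι R}

theorem nonneg_of_mulVec_nonneg (hoff : ∀ i j, i ≠ j → A i j ≤ 0)
    (hrow : ∀ i, 0 < ∑ j, A i j) {x : ι → R} (hx : 0 ≤ A *ᵥ x) : 0 ≤ x := by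
  by_contra hneg
  obtain ⟨i, hi⟩ : ∃ i, x i < 0 := by simpa [Pi.le_def] using hneg
  obtain ⟨i₀, -, hmin⟩ := Finset.exists_min_image Finset.univ x ⟨i, Finset.mem_univ i⟩
  have hmin_neg : x i₀ < 0 := (hmin i (Finset.mem_univ i)).trans_lt hi
  have hrow_bound : (A *ᵥ x) i₀ ≤ (∑ j, A i₀ j) * x i₀ := by
    rw [Finset.sum_mul]
    refine Finset.sum_le_sum fun j _ => ?_
    rcases eq_or_ne i₀ j with rfl | hne
    · exact le_rfl
    · exact mul_le_mul_of_nonpos_left (hmin j (Finset.mem_univ j)) (hoff i₀ j hne)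
  exact (hrow_bound.trans_lt (mul_neg_of_pos_of_neg (hrow i₀) hmin_neg)).not_ge (hx i₀)

theorem eq_zero_of_mulVec_eq_zero_of_rowSum_pos (hoff : ∀ i j, i ≠ j → A i j ≤ 0)
    (hrow : ∀ i, 0 < ∑ j, A i j) {x : ι → R} (hx : A *ᵥ x = 0) : x = 0 := by
  have hx_nonneg : 0 ≤ x := nonneg_of_mulVec_nonneg hoff hrow hx.ge
  have hx_nonpos : 0 ≤ -x := nonneg_of_mulVec_nonneg hoff hrow (by simp [mulVec_neg, hx])
  exact le_antisymm (neg_nonneg.mp hx_nonpos) hx_nonneg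

end MaximumPrinciple

section Inverse

variable [Fintype ι] [DecidableEq ι] [Field R] [LinearOrder R] [IsStrictOrderedRing R] {A : Matrix ι ι R}

theorem det_ne_zero_of_offDiag_nonpos_of_rowSum_pos (hoff : ∀ i j, i ≠ j → A i j ≤ 0)
    (hrow : ∀ i, 0 < ∑ j, A i j) : A.det ≠ 0 := by
  rw [Ne, ← exists_mulVec_eq_zero_iff]
  rintro ⟨v, hv, hAv⟩
  exact hv (eq_zero_of_mulVec_eq_zero_of_rowSum_pos hoff hrow hAv)

theorem inv_nonneg_of_offDiag_nonpos_of_rowSum_pos (hoff : ∀ i j, i ≠ j → A i j ≤ 0)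
    (hrow : ∀ i, 0 < ∑ j, A i j) (i j : ι) : 0 ≤ A⁻¹ i j := by
  have hdet : IsUnit A.det := (det_ne_zero_of_offDiag_nonpos_of_rowSum_pos hoff hrow).isUnit
  have hcol : 0 ≤ A⁻¹ *ᵥ Pi.single j 1 := by
    refine nonneg_of_mulVec_nonneg hoff hrow ?_
    rw [mulVec_mulVec, mul_nonsing_inv A hdet, one_mulVec]
    exact Pi.single_nonneg.mpr zero_le_one
  simpa [mulVec_single_one] using hcol i

theorem rowSum_inv_le_one_of_offDiag_nonpos_of_one_le_rowSum
    (hoff : ∀ i j, i ≠ j → A i j ≤ 0) (hrow : ∀ i, 1 ≤ ∑ j, A i j) (i : ι) :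
    ∑ j, A⁻¹ i j ≤ 1 := by
  have hrow_pos : ∀ i, 0 < ∑ j, A i j := fun i => zero_lt_one.trans_le (hrow i)
  have hdet : IsUnit A.det := (det_ne_zero_of_offDiag_nonpos_of_rowSum_pos hoff hrow_pos).isUnit
  have hgap : 0 ≤ 1 - A⁻¹ *ᵥ 1 := by
    refine nonneg_of_mulVec_nonneg hoff hrow_pos ?_
    rw [mulVec_sub, mulVec_mulVec, mul_nonsing_inv A hdet, one_mulVec, sub_nonneg]
    intro k
    simpa [mulVec, dotProduct_one] using hrow k
  simpa [mulVec, dotProduct_one] using hgap i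

end Inverse

section OneAddSmul

variable [DecidableEq ι] [Ring R] [PartialOrder R] [IsOrderedRing R] {Δt : R} {M : Matrix ι ι R}

theorem one_add_smul_apply_nonpos (hΔt : 0 ≤ Δt) (hoff : ∀ i j, i ≠ j → M i j ≤ 0)
    {i j : ι} (hij : i ≠ j) : (1 + Δt • M) i j ≤ 0 := by
  simpa [one_apply_ne hij] using mul_nonpos_of_nonneg_of_nonpos hΔt (hoff i j hij)

theorem one_le_rowSum_one_add_smul [Fintype ι] (hΔt : 0 ≤ Δt) (hrow : ∀ i, 0 ≤ ∑ j, M i j)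
    (i : ι) : 1 ≤ ∑ j, (1 + Δt • M) i j := by
  simpa [Finset.sum_add_distrib, one_apply, ← Finset.mul_sum] using
    mul_nonneg hΔt (hrow i)

end OneAddSmul

end Matrix

/-- A matrix of the form `I + Δt M`, where `Δt > 0` and `M` has nonpositive off-diagonal
entries and nonnegative row sums, is invertible with entrywise nonnegative inverse whose
row sums are at most 1. -/
theorem implicit_euler_matrix_inverse_nonneg {n : ℕ} (Δt : ℝ) (hΔt : 0 < Δt)
    (M : Matrix (Fin n) (Fin n) ℝ)
    (hoff : ∀ i j, i ≠ j → M i j ≤ 0)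
    (hrow : ∀ i, 0 ≤ ∑ j, M i j) :
    IsUnit (1 + Δt • M).det ∧
    (∀ i j, 0 ≤ (1 + Δt • M)⁻¹ i j) ∧
    ∀ i, ∑ j, (1 + Δt • M)⁻¹ i j ≤ 1 := by
  have hAoff : ∀ i j, i ≠ j → (1 + Δt • M) i j ≤ 0 := fun _ _ hij =>
    one_add_smul_apply_nonpos hΔt.le hoff hij
  have hArow : ∀ i, 1 ≤ ∑ j, (1 + Δt • M) i j := one_le_rowSum_one_add_smul hΔt.le hrow
  have hArow_pos : ∀ i, 0 < ∑ j, (1 + Δt • M) i j := fun i => zero_lt_one.trans_le (hArow i)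
  exact ⟨(det_ne_zero_of_offDiag_nonpos_of_rowSum_pos hAoff hArow_pos).isUnit,
    inv_nonneg_of_offDiag_nonpos_of_rowSum_pos hAoff hArow_pos,
    rowSum_inv_le_one_of_offDiag_nonpos_of_one_le_rowSum hAoff hArow⟩
end
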